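/- arXiv:2212.07486 — 3 statements merged into one kernel-verified Lean document; each statement's English description precedes it below -/
import Mathlib

section
/- With the setup of finite ground states S, abstraction φ : S → T, probability mass functions d_e, d_D on S with d_D > 0, define abstract ratios ζ^φ(s) = D_e(φ(s))/D_D(φ(s)) where D_e(t) = ∑_{φ(s)=t} d_e(s), D_D(t) = ∑_{φ(s)=t} d_D(s). If for all s₁, s₂ with φ(s₁) = φ(s₂) we have d_e(s₁)/d_D(s₁) = d_e(s₂)/d_D(s₂), then ζ^φ(s) = d_e(s)/d_D(s) for all s, and hence the variances of the ground and abstract ratios under d_D are equal. -/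
theorem stmt_3 {S T : Type*} [Fintype S] [Fintype T] [DecidableEq T]
    (φ : S → T) (de dD : S → ℝ)
    (hde : ∀ s, 0 ≤ de s) (hdD : ∀ s, 0 < dD s)
    (hde1 : ∑ s, de s = 1) (hdD1 : ∑ s, dD s = 1)
    (De DD : T → ℝ)
    (hDe : ∀ t, De t = ∑ s with φ s = t, de s)
    (hDD : ∀ t, DD t = ∑ s with φ s = t, dD s)
    (hconst : ∀ s₁ s₂, φ s₁ = φ s₂ → de s₁ / dD s₁ = de s₂ / dD s₂) :
    (∀ s, De (φ s) / DD (φ s) = de s / dD s) ∧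
    ((∑ s, dD s * (De (φ s) / DD (φ s)) ^ 2)
        - (∑ s, dD s * (De (φ s) / DD (φ s))) ^ 2
      = (∑ s, dD s * (de s / dD s) ^ 2)
        - (∑ s, dD s * (de s / dD s)) ^ 2) := by
  have key : ∀ s, De (φ s) / DD (φ s) = de s / dD s := by
    intro s
    have hDDpos : 0 < DD (φ s) := by
      rw [hDD]
      refine Finset.sum_pos' (fun i _ => (hdD i).le) ⟨s, ?_, hdD s⟩
      simp
    have hDe' : De (φ s) = (de s / dD s) * DD (φ s) := by
      rw [hDe, hDD, Finset.mul_sum]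
      refine Finset.sum_congr rfl fun i hi => ?_
      simp only [Finset.mem_filter] at hi
      have h := hconst i s hi.2
      rw [div_eq_div_iff (hdD i).ne' (hdD s).ne'] at h
      rw [div_mul_eq_mul_div, eq_div_iff (hdD s).ne']
      linarith
    rw [hDe', mul_div_assoc, div_self hDDpos.ne', mul_one]
  exact ⟨key, by simp only [key]⟩
end

section
/- Let S be a finite type, A a finite type, φ : S → T, and let d_e, d_D be probability mass functions on S × A with d_D > 0 everywhere. Let r : S × A → ℝ satisfy r(s₁,a) = r(s₂,a) whenever φ(s₁) = φ(s₂). Define abstract distributions D_e(t,a) = ∑_{φ(s)=t} d_e(s,a), D_D(t,a) = ∑_{φ(s)=t} d_D(s,a), and r^φ(t,a) = r(s,a) for any s with φ(s)=t (well-defined by assumption, when t is in the range of φ). Then the expectation under d_D of the single-sample abstract estimator X(s,a) = (D_e(φ(s),a)/D_D(φ(s),a)) · r^φ(φ(s),a) equals ∑_{s,a} d_e(s,a) r(s,a). -/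
theorem stmt_6 {S T A : Type*} [Fintype S] [Fintype T] [Fintype A] [DecidableEq T]
    (φ : S → T) (de dD : S × A → ℝ)
    (hde : ∀ z, 0 ≤ de z) (hde1 : ∑ z, de z = 1)
    (hdD : ∀ z, 0 < dD z) (hdD1 : ∑ z, dD z = 1)
    (r : S × A → ℝ) (rφ : T → A → ℝ)
    (hr : ∀ s a, rφ (φ s) a = r (s, a))
    (De DD : T → A → ℝ)
    (hDe : ∀ t a, De t a = ∑ s with φ s = t, de (s, a))
    (hDD : ∀ t a, DD t a = ∑ s with φ s = t, dD (s, a)) :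
    ∑ s, ∑ a, dD (s, a) * (De (φ s) a / DD (φ s) a * rφ (φ s) a)
      = ∑ s, ∑ a, de (s, a) * r (s, a) := by
  conv_lhs => rw [Finset.sum_comm]
  conv_rhs => rw [Finset.sum_comm]
  refine Finset.sum_congr rfl fun a _ => ?_
  rw [← Finset.sum_fiberwise (g := φ) (s := Finset.univ),
      ← Finset.sum_fiberwise (g := φ) (s := Finset.univ)]
  refine Finset.sum_congr rfl fun t _ => ?_
  by_cases h : (Finset.univ.filter fun s => φ s = t).Nonempty
  · have hDDpos : 0 < DD t a := by
      rw [hDD]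
      exact Finset.sum_pos (fun s _ => hdD _) h
    have : ∑ s with φ s = t, dD (s, a) * (De (φ s) a / DD (φ s) a * rφ (φ s) a)
        = (De t a / DD t a * rφ t a) * ∑ s with φ s = t, dD (s, a) := by
      rw [Finset.mul_sum]
      refine Finset.sum_congr rfl fun s hs => ?_
      rw [Finset.mem_filter] at hs
      rw [hs.2, mul_comm]
    rw [this, ← hDD, div_mul_eq_mul_div, div_mul_eq_mul_div,
        mul_div_assoc, div_self hDDpos.ne', mul_one, hDe, Finset.sum_mul]
    refine Finset.sum_congr rfl fun s hs => ?_
    rw [Finset.mem_filter] at hs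
    rw [← hs.2, hr]
  · rw [Finset.not_nonempty_iff_eq_empty] at h
    simp [h]
end

section
/- Let S, A be finite, π a policy, P a transition kernel, γ ∈ [0,1), d₀ an initial distribution, and define β_t as the state distribution at time t under π. For any bounded x : S × A → ℝ and ν defined by ν(s,a) = x(s,a) + γ·∑_{s'} P(s,a,s')·∑_{a'} π(s',a')·ν(s',a'), we have (1−γ)·∑_{t=0}^∞ γ^t E_{s∼β_t, a∼π}[x(s,a)] = (1−γ)·E_{s∼d₀, a∼π}[ν(s,a)]. -/
/-!
Writing `f t = E_{β_t, π}[ν]`, the Bellman equation for `ν` and the recursion for `β` give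
`E_{β_t, π}[x] = f t - γ f (t + 1)`, so `∑ γ^t E_{β_t, π}[x]` telescopes to `f 0 = E_{d₀, π}[ν]`.
The remainder `γ^t f t` vanishes because a stochastic kernel does not increase the `ℓ¹` norm of
`β_t`, so `f` stays bounded.
-/

open Finset Filter

theorem hasSum_pow_mul_sub_mul_succ {γ : ℝ} (hγ : |γ| < 1) {f : ℕ → ℝ} {C : ℝ}
    (hf : ∀ n, |f n| ≤ C) : HasSum (fun n => γ ^ n * (f n - γ * f (n + 1))) (f 0) := by
  set g : ℕ → ℝ := fun n => γ ^ n * f n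
  have hgeom := tendsto_pow_atTop_nhds_zero_of_lt_one (abs_nonneg γ) hγ
  have hg : Tendsto g atTop (nhds 0) := by
    refine squeeze_zero_norm (a := fun n => |γ| ^ n * C) (fun n => ?_)
      (by simpa using hgeom.mul_const C)
    rw [Real.norm_eq_abs, abs_mul, abs_pow]
    exact mul_le_mul_of_nonneg_left (hf n) (by positivity)
  have hsummable : Summable fun n => γ ^ n * (f n - γ * f (n + 1)) := by
    refine .of_norm_bounded ((summable_geometric_of_lt_one (abs_nonneg γ) hγ).mul_right (2 * C))
      fun n => ?_
    rw [Real.norm_eq_abs, abs_mul, abs_pow]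
    refine mul_le_mul_of_nonneg_left ?_ (by positivity)
    calc |f n - γ * f (n + 1)| ≤ |f n| + |γ| * |f (n + 1)| := by rw [← abs_mul]; exact abs_sub _ _
      _ ≤ 2 * C := by nlinarith [hf n, hf (n + 1), abs_nonneg γ, abs_nonneg (f (n + 1))]
  rw [hsummable.hasSum_iff_tendsto_nat]
  have htelescope : ∀ n, ∑ i ∈ range n, γ ^ i * (f i - γ * f (i + 1)) = g 0 - g n := fun n => by
    rw [← sum_range_sub']
    exact sum_congr rfl fun i _ => by simp only [g]; ring
  simpa [htelescope, g] using (tendsto_const_nhds (x := g 0)).sub hg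

section StateActionMean

variable {S A : Type*} [Fintype S] [Fintype A]

/-- `E_{s ∼ μ, a ∼ π s}[g s a]`, for an arbitrary signed weight `μ` on states. -/
def stateActionMean (π : S → A → ℝ) (μ : S → ℝ) (g : S → A → ℝ) : ℝ :=
  ∑ s, ∑ a, μ s * π s a * g s a

theorem stateActionMean_sub_mul (π : S → A → ℝ) (μ : S → ℝ) (g h : S → A → ℝ) (c : ℝ) :
    stateActionMean π μ (fun s a => g s a - c * h s a)
      = stateActionMean π μ g - c * stateActionMean π μ h := by
  simp only [stateActionMean, mul_sub, sum_sub_distrib, mul_sum]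
  congr! 3
  ring

theorem stateActionMean_next {π : S → A → ℝ} {P : S → A → S → ℝ} {μ μ' : S → ℝ}
    (hμ' : ∀ s', μ' s' = ∑ s, ∑ a, μ s * π s a * P s a s') (ν : S → A → ℝ) :
    stateActionMean π μ (fun s a => ∑ s', P s a s' * ∑ a', π s' a' * ν s' a')
      = stateActionMean π μ' ν := by
  set V : S → ℝ := fun s' => ∑ a', π s' a' * ν s' a'
  calc stateActionMean π μ (fun s a => ∑ s', P s a s' * V s')
      = ∑ s', ∑ s, ∑ a, μ s * π s a * P s a s' * V s' := by
        simp only [stateActionMean, mul_sum, mul_assoc]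
        exact sum_comm_cycle
    _ = ∑ s', μ' s' * V s' := by simp only [hμ', sum_mul]
    _ = stateActionMean π μ' ν := by simp only [stateActionMean, V, mul_sum, mul_assoc]

theorem sum_abs_next_le {π : S → A → ℝ} (hπ : ∀ s, (∀ a, 0 ≤ π s a) ∧ ∑ a, π s a = 1)
    {P : S → A → S → ℝ} (hP : ∀ s a, (∀ s', 0 ≤ P s a s') ∧ ∑ s', P s a s' = 1) {μ μ' : S → ℝ}
    (hμ' : ∀ s', μ' s' = ∑ s, ∑ a, μ s * π s a * P s a s') :
    ∑ s', |μ' s'| ≤ ∑ s, |μ s| := by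
  calc ∑ s', |μ' s'| ≤ ∑ s', ∑ s, ∑ a, |μ s| * π s a * P s a s' := by
        gcongr with s'
        rw [hμ']
        refine (abs_sum_le_sum_abs _ _).trans (sum_le_sum fun s _ => ?_)
        refine (abs_sum_le_sum_abs _ _).trans_eq (sum_congr rfl fun a _ => ?_)
        rw [abs_mul, abs_mul, abs_of_nonneg ((hπ s).1 a), abs_of_nonneg ((hP s a).1 s')]
    _ = ∑ s, |μ s| * ∑ a, π s a * ∑ s', P s a s' := by
        rw [sum_comm]
        refine sum_congr rfl fun s _ => ?_
        rw [sum_comm, mul_sum]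
        simp only [mul_sum, mul_assoc]
    _ = ∑ s, |μ s| := by simp [(hP _ _).2, (hπ _).2]

theorem abs_stateActionMean_le {π : S → A → ℝ} (hπ : ∀ s, (∀ a, 0 ≤ π s a) ∧ ∑ a, π s a = 1)
    (μ : S → ℝ) (g : S → A → ℝ) :
    |stateActionMean π μ g| ≤ (∑ s, |μ s|) * ‖g‖ := by
  calc |stateActionMean π μ g| ≤ ∑ s, ∑ a, |μ s| * π s a * ‖g‖ := by
        refine (abs_sum_le_sum_abs _ _).trans (sum_le_sum fun s _ => ?_)
        refine (abs_sum_le_sum_abs _ _).trans (sum_le_sum fun a _ => ?_)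
        rw [abs_mul, abs_mul, abs_of_nonneg ((hπ s).1 a)]
        have : |g s a| ≤ ‖g‖ := (norm_le_pi_norm (g s) a).trans (norm_le_pi_norm g s)
        have := (hπ s).1 a
        gcongr
    _ = (∑ s, |μ s|) * ‖g‖ := by simp [← sum_mul, ← mul_sum, (hπ _).2]

end StateActionMean

theorem stmt_18_general {S A : Type*} [Fintype S] [Fintype A]
    (π : S → A → ℝ) (hπ : ∀ s, (∀ a, 0 ≤ π s a) ∧ ∑ a, π s a = 1)
    (P : S → A → S → ℝ) (hP : ∀ s a, (∀ s', 0 ≤ P s a s') ∧ ∑ s', P s a s' = 1)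
    (γ : ℝ) (hγ0 : 0 ≤ γ) (hγ1 : γ < 1)
    (d0 : S → ℝ)
    (β : ℕ → S → ℝ) (hβ0 : β 0 = d0)
    (hβ : ∀ t s', β (t + 1) s' = ∑ s, ∑ a, β t s * π s a * P s a s')
    (x : S → A → ℝ)
    (ν : S → A → ℝ)
    (hν : ∀ s a, ν s a = x s a + γ * ∑ s', P s a s' * ∑ a', π s' a' * ν s' a') :
    (1 - γ) * ∑' t : ℕ, γ ^ t * ∑ s, ∑ a, β t s * π s a * x s a
      = (1 - γ) * ∑ s, ∑ a, d0 s * π s a * ν s a := by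
  have hβ_abs : ∀ t, ∑ s, |β t s| ≤ ∑ s, |d0 s| := fun t =>
    hβ0 ▸ antitone_nat_of_succ_le (f := fun t => ∑ s, |β t s|)
      (fun t => sum_abs_next_le hπ hP (hβ t)) (Nat.zero_le t)
  have hbound : ∀ t, |stateActionMean π (β t) ν| ≤ (∑ s, |d0 s|) * ‖ν‖ := fun t =>
    (abs_stateActionMean_le hπ _ ν).trans (mul_le_mul_of_nonneg_right (hβ_abs t) (norm_nonneg ν))
  have hstep : ∀ t, stateActionMean π (β t) x
      = stateActionMean π (β t) ν - γ * stateActionMean π (β (t + 1)) ν := fun t => by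
    rw [← stateActionMean_next (hβ t), ← stateActionMean_sub_mul]
    congr
    funext s a
    linarith [hν s a]
  have hsum := hasSum_pow_mul_sub_mul_succ (abs_lt.2 ⟨by linarith, hγ1⟩) hbound
  simp only [← hstep, hβ0] at hsum
  exact congrArg ((1 - γ) * ·) hsum.tsum_eq

theorem stmt_18 {S A : Type*} [Fintype S] [Fintype A]
    (π : S → A → ℝ) (hπ : ∀ s, (∀ a, 0 ≤ π s a) ∧ ∑ a, π s a = 1)
    (P : S → A → S → ℝ) (hP : ∀ s a, (∀ s', 0 ≤ P s a s') ∧ ∑ s', P s a s' = 1)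
    (γ : ℝ) (hγ0 : 0 ≤ γ) (hγ1 : γ < 1)
    (d0 : S → ℝ) (hd0 : ∀ s, 0 ≤ d0 s) (hd01 : ∑ s, d0 s = 1)
    (β : ℕ → S → ℝ) (hβ0 : β 0 = d0)
    (hβ : ∀ t s', β (t + 1) s' = ∑ s, ∑ a, β t s * π s a * P s a s')
    (x : S → A → ℝ) (M : ℝ) (hx : ∀ s a, |x s a| ≤ M)
    (ν : S → A → ℝ)
    (hν : ∀ s a, ν s a = x s a + γ * ∑ s', P s a s' * ∑ a', π s' a' * ν s' a') :
    (1 - γ) * ∑' t : ℕ, γ ^ t * ∑ s, ∑ a, β t s * π s a * x s a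
      = (1 - γ) * ∑ s, ∑ a, d0 s * π s a * ν s a :=
  stmt_18_general π hπ P hP γ hγ0 hγ1 d0 β hβ0 hβ x ν hν
end
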